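/- arXiv:1610.02132 — 6 statements merged into one kernel-verified Lean document; each statement's English description precedes it below -/
import Mathlib

section
/- Let n ≥ 1, let v ∈ ℝⁿ be a nonzero vector, and let s ≥ 1 be an integer. Then the stochastic quantization Q_s(v) is unbiased: E[Q_s(v)] = v, i.e., for every coordinate i, E[Q_s(v)_i] = v_i. -/
open MeasureTheory ProbabilityTheory

/-- `Qv` is (a realization on the probability space `(Ω, μ)` of) the stochastic
quantization `Q_s(v)` of the nonzero vector `v ∈ ℝⁿ` with `s` quantization levels:
`Q_s(v)_i = ‖v‖₂ · sgn(vᵢ) · ξᵢ`, where the `ξᵢ` are independent, and, with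
`aᵢ = |vᵢ|/‖v‖₂` and `ℓᵢ ∈ {0, …, s−1}` such that `aᵢ ∈ [ℓᵢ/s, (ℓᵢ+1)/s]`, `ξᵢ` takes
the value `(ℓᵢ+1)/s` with probability `pᵢ = aᵢ·s − ℓᵢ` and `ℓᵢ/s` with probability
`1 − pᵢ`. -/
def IsStochQuant {n : ℕ} (s : ℕ) {Ω : Type*} [MeasurableSpace Ω] (μ : Measure Ω)
    (v : EuclideanSpace ℝ (Fin n)) (Qv : Ω → EuclideanSpace ℝ (Fin n)) : Prop :=
  ∃ (ξ : Fin n → Ω → ℝ) (ℓ : Fin n → ℕ),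
    (∀ i, Measurable (ξ i)) ∧
    iIndepFun ξ μ ∧
    (∀ i, ℓ i ≤ s - 1) ∧
    (∀ i, (ℓ i : ℝ) / s ≤ |v i| / ‖v‖ ∧ |v i| / ‖v‖ ≤ ((ℓ i : ℝ) + 1) / s) ∧
    (∀ i, μ {ω | ξ i ω = ((ℓ i : ℝ) + 1) / s} =
        ENNReal.ofReal (|v i| / ‖v‖ * s - ℓ i)) ∧
    (∀ i, μ {ω | ξ i ω = (ℓ i : ℝ) / s} =
        1 - ENNReal.ofReal (|v i| / ‖v‖ * s - ℓ i)) ∧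
    (∀ ω i, Qv ω i = ‖v‖ * (if 0 ≤ v i then (1 : ℝ) else -1) * ξ i ω)

/-! Each `ξᵢ` is a two-point variable with mean `pᵢ (ℓᵢ + 1)/s + (1 - pᵢ) ℓᵢ/s = (ℓᵢ + pᵢ)/s = aᵢ`,
so `E[Q_s(v)ᵢ] = ‖v‖ sgn(vᵢ) |vᵢ|/‖v‖ = vᵢ`. -/

section

variable {Ω : Type*} [MeasurableSpace Ω] {μ : Measure Ω} {X : Ω → ℝ}

theorem integral_eq_sum_of_ae_mem_finset [IsFiniteMeasure μ] (hX : Measurable X)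
    {S : Finset ℝ} (hS : ∀ᵐ ω ∂μ, X ω ∈ S) :
    ∫ ω, X ω ∂μ = ∑ x ∈ S, μ.real (X ⁻¹' {x}) * x := by
  have hS' : ∀ᵐ x ∂μ.map X, x ∈ (S : Set ℝ) :=
    (ae_map_iff hX.aemeasurable S.measurableSet).mpr hS
  rw [← integral_map (f := fun x ↦ x) hX.aemeasurable aestronglyMeasurable_id,
    integral_eq_setIntegral hS', setIntegral_finset S IntegrableOn.finset]
  simp [map_measureReal_apply hX]

theorem integral_eq_of_two_point [IsProbabilityMeasure μ] (hX : Measurable X) {x y p : ℝ}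
    (hxy : x ≠ y) (hp : 0 ≤ p) (hx : μ (X ⁻¹' {x}) = ENNReal.ofReal p)
    (hy : μ (X ⁻¹' {y}) = 1 - ENNReal.ofReal p) :
    ∫ ω, X ω ∂μ = p * x + (1 - p) * y := by
  have hp1 : ENNReal.ofReal p ≤ 1 := hx ▸ prob_le_one
  have hpair : μ (X ⁻¹' {x, y}) = 1 := by
    rw [Set.insert_eq, Set.preimage_union,
      measure_union ((Set.disjoint_singleton.mpr hxy).preimage X) (hX (measurableSet_singleton y)),
      hx, hy, add_tsub_cancel_of_le hp1]
  have hS : ∀ᵐ ω ∂μ, X ω ∈ ({x, y} : Finset ℝ) := by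
    simpa using (ae_iff_measure_eq (hX (Set.toFinite {x, y}).measurableSet).nullMeasurableSet).mpr
      (hpair.trans measure_univ.symm)
  rw [integral_eq_sum_of_ae_mem_finset hX hS, Finset.sum_pair hxy, measureReal_def,
    measureReal_def, hx, hy, ENNReal.toReal_sub_of_le hp1 ENNReal.one_ne_top,
    ENNReal.toReal_ofReal hp, ENNReal.toReal_one]

theorem integral_eq_of_stochasticRounding [IsProbabilityMeasure μ] (hX : Measurable X)
    {a ℓ s : ℝ} (hs : 0 < s) (hℓa : ℓ / s ≤ a) (hhi : μ (X ⁻¹' {(ℓ + 1) / s}) = ENNReal.ofReal (a * s - ℓ))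
    (hlo : μ (X ⁻¹' {ℓ / s}) = 1 - ENNReal.ofReal (a * s - ℓ)) :
    ∫ ω, X ω ∂μ = a := by
  have hp : 0 ≤ a * s - ℓ := sub_nonneg.mpr ((div_le_iff₀ hs).mp hℓa)
  have hlevels : (ℓ + 1) / s ≠ ℓ / s := by
    rw [Ne, div_left_inj' hs.ne']
    linarith
  rw [integral_eq_of_two_point hX hlevels hp hhi hlo]
  field_simp
  ring

end

theorem stochQuant_unbiased_general {n : ℕ}
    (v : EuclideanSpace ℝ (Fin n)) (s : ℕ) (hs : 1 ≤ s)
    {Ω : Type*} [MeasurableSpace Ω] (μ : Measure Ω) [IsProbabilityMeasure μ]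
    (Qv : Ω → EuclideanSpace ℝ (Fin n)) (hQ : IsStochQuant s μ v Qv) :
    ∀ i, ∫ ω, Qv ω i ∂μ = v i := by
  obtain ⟨ξ, ℓ, hξ, -, -, hbound, hhi, hlo, hQv⟩ := hQ
  intro i
  have hmean : ∫ ω, ξ i ω ∂μ = |v i| / ‖v‖ :=
    integral_eq_of_stochasticRounding (hξ i) (by exact_mod_cast hs) (hbound i).1 (hhi i) (hlo i)
  -- If `‖v‖ = 0`, then `|v i| / ‖v‖` is the junk value `0`, but so is `v i`.
  have hnorm : ‖v‖ = 0 → |v i| = 0 := fun h ↦ by simp [norm_eq_zero.mp h]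
  simp_rw [hQv, integral_const_mul, hmean]
  rw [mul_right_comm, mul_div_cancel_of_imp' hnorm]
  split_ifs with hvi
  · rw [abs_of_nonneg hvi, mul_one]
  · rw [abs_of_neg (not_le.mp hvi), neg_mul_neg, mul_one]

/-- **Unbiasedness of stochastic quantization:** `E[Q_s(v)] = v` coordinatewise. -/
theorem stochQuant_unbiased {n : ℕ} (hn : 1 ≤ n)
    (v : EuclideanSpace ℝ (Fin n)) (hv : v ≠ 0) (s : ℕ) (hs : 1 ≤ s)
    {Ω : Type*} [MeasurableSpace Ω] (μ : Measure Ω) [IsProbabilityMeasure μ]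
    (Qv : Ω → EuclideanSpace ℝ (Fin n)) (hQ : IsStochQuant s μ v Qv) :
    ∀ i, ∫ ω, Qv ω i ∂μ = v i :=
  stochQuant_unbiased_general v s hs μ Qv hQ
end

section
/- Let n ≥ 1, let v ∈ ℝⁿ be a nonzero vector, and let s ≥ 1 be an integer. Then the stochastic quantization Q_s(v) satisfies the variance bound E[‖Q_s(v) − v‖₂²] ≤ min(n/s², √n/s) · ‖v‖₂². -/
open MeasureTheory ProbabilityTheory

/-! Writing `vᵢ = ‖v‖ · sgn(vᵢ) · aᵢ`, the error is `‖Q_s(v) − v‖² = ‖v‖² ∑ᵢ (ξᵢ − aᵢ)²`, so by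
linearity of expectation it suffices to bound each term. The
coordinate `ξᵢ` rounds `aᵢ` to one of its two neighbouring grid points, unbiasedly, so
`E[(ξᵢ − aᵢ)²] = pᵢ(1 − pᵢ)/s²`, which is at most `1/s²` and at most `pᵢ/s² ≤ aᵢ/s`. Summing,
the first bound gives `n/s²`, and the second gives `(∑ᵢ |vᵢ|)/(‖v‖ s) ≤ √n/s` by
Cauchy–Schwarz. -/

theorem EuclideanSpace.sum_abs_le_sqrt_card_mul_norm {ι : Type*} [Fintype ι]
    (x : EuclideanSpace ℝ ι) : ∑ i, |x i| ≤ √(Fintype.card ι) * ‖x‖ := by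
  refine le_of_sq_le_sq ?_ (by positivity)
  calc (∑ i, |x i|) ^ 2 ≤ Fintype.card ι * ∑ i, |x i| ^ 2 := sq_sum_le_card_mul_sum_sq
    _ = (√(Fintype.card ι) * ‖x‖) ^ 2 := by
      simp only [sq_abs, mul_pow, Real.sq_sqrt (Nat.cast_nonneg _), EuclideanSpace.real_norm_sq_eq]

theorem EuclideanSpace.norm_sub_sq_eq_of_apply_eq {ι : Type*} [Fintype ι]
    {v q : EuclideanSpace ℝ ι} (x : ι → ℝ) (hv : v ≠ 0)
    (hq : ∀ i, q i = ‖v‖ * (if 0 ≤ v i then 1 else -1) * x i) :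
    ‖q - v‖ ^ 2 = ‖v‖ ^ 2 * ∑ i, (x i - |v i| / ‖v‖) ^ 2 := by
  have hv' : ‖v‖ ≠ 0 := norm_ne_zero_iff.2 hv
  rw [EuclideanSpace.real_norm_sq_eq, Finset.mul_sum]
  refine Finset.sum_congr rfl fun i _ => ?_
  rw [PiLp.sub_apply, hq]
  split_ifs with h
  · rw [abs_of_nonneg h]; field_simp
  · rw [abs_of_neg (not_le.1 h)]; field_simp; ring

section TwoValued

variable {Ω : Type*} [MeasurableSpace Ω] {μ : Measure Ω} [IsProbabilityMeasure μ]
  {ξ : Ω → ℝ} {lo hi p : ℝ}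

theorem ae_eq_or_eq_of_measure_eq (hξ : Measurable ξ) (hne : lo ≠ hi)
    (hhi : μ {ω | ξ ω = hi} = ENNReal.ofReal p) (hlo : μ {ω | ξ ω = lo} = 1 - ENNReal.ofReal p) :
    ∀ᵐ ω ∂μ, ξ ω = hi ∨ ξ ω = lo := by
  have hdisj : Disjoint {ω | ξ ω = hi} {ω | ξ ω = lo} :=
    Set.disjoint_left.2 fun _ h₁ h₂ => hne (h₂.symm.trans h₁)
  have hA : MeasurableSet {ω | ξ ω = hi} := hξ (measurableSet_singleton hi)
  have hB : MeasurableSet {ω | ξ ω = lo} := hξ (measurableSet_singleton lo)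
  refine (ae_iff_measure_eq (hA.union hB).nullMeasurableSet).2 ?_
  change μ ({ω | ξ ω = hi} ∪ {ω | ξ ω = lo}) = μ Set.univ
  rw [measure_univ, measure_union hdisj hB, hhi, hlo,
    add_tsub_cancel_of_le (hhi ▸ prob_le_one)]

theorem comp_ae_eq_indicator_of_measure_eq (f : ℝ → ℝ) (hξ : Measurable ξ) (hne : lo ≠ hi)
    (hhi : μ {ω | ξ ω = hi} = ENNReal.ofReal p) (hlo : μ {ω | ξ ω = lo} = 1 - ENNReal.ofReal p) :
    (fun ω => f (ξ ω)) =ᵐ[μ]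
      {ω | ξ ω = hi}.indicator (fun _ => f hi) + {ω | ξ ω = lo}.indicator (fun _ => f lo) := by
  filter_upwards [ae_eq_or_eq_of_measure_eq hξ hne hhi hlo] with ω hω
  rcases hω with h | h <;> simp [Set.indicator, h, hne, hne.symm]

theorem integrable_comp_of_measure_eq (f : ℝ → ℝ) (hξ : Measurable ξ) (hne : lo ≠ hi)
    (hhi : μ {ω | ξ ω = hi} = ENNReal.ofReal p) (hlo : μ {ω | ξ ω = lo} = 1 - ENNReal.ofReal p) :
    Integrable (fun ω => f (ξ ω)) μ :=
  (((integrable_const _).indicator (hξ (measurableSet_singleton hi))).add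
    ((integrable_const _).indicator (hξ (measurableSet_singleton lo)))).congr
    (comp_ae_eq_indicator_of_measure_eq f hξ hne hhi hlo).symm

theorem integral_comp_of_measure_eq (f : ℝ → ℝ) (hξ : Measurable ξ) (hne : lo ≠ hi)
    (hp : 0 ≤ p) (hhi : μ {ω | ξ ω = hi} = ENNReal.ofReal p)
    (hlo : μ {ω | ξ ω = lo} = 1 - ENNReal.ofReal p) :
    ∫ ω, f (ξ ω) ∂μ = p * f hi + (1 - p) * f lo := by
  have hle : ENNReal.ofReal p ≤ 1 := hhi ▸ prob_le_one
  have hA : MeasurableSet {ω | ξ ω = hi} := hξ (measurableSet_singleton hi)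
  have hB : MeasurableSet {ω | ξ ω = lo} := hξ (measurableSet_singleton lo)
  rw [integral_congr_ae (comp_ae_eq_indicator_of_measure_eq f hξ hne hhi hlo)]
  simp only [Pi.add_apply]
  rw [integral_add ((integrable_const _).indicator hA) ((integrable_const _).indicator hB),
    integral_indicator_const _ hA, integral_indicator_const _ hB, measureReal_def,
    measureReal_def, hhi, hlo, ENNReal.toReal_sub_of_le hle ENNReal.one_ne_top,
    ENNReal.toReal_ofReal hp, ENNReal.toReal_one, smul_eq_mul, smul_eq_mul]

end TwoValued

section StochasticRounding

variable {s ℓ a : ℝ}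

theorem div_lt_add_one_div (hs : 0 < s) : ℓ / s < (ℓ + 1) / s := by
  gcongr; linarith

theorem stochRound_prob_mem_Icc (hs : 0 < s) (hlo : ℓ / s ≤ a) (hhi : a ≤ (ℓ + 1) / s) :
    a * s - ℓ ∈ Set.Icc 0 1 := by
  rw [div_le_iff₀ hs] at hlo
  rw [le_div_iff₀ hs] at hhi
  constructor <;> linarith

theorem integral_sq_sub_of_stochRound {Ω : Type*} [MeasurableSpace Ω] {μ : Measure Ω}
    [IsProbabilityMeasure μ] {ξ : Ω → ℝ} (hξ : Measurable ξ) (hs : 0 < s)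
    (hlo : ℓ / s ≤ a) (hhi : a ≤ (ℓ + 1) / s)
    (h₁ : μ {ω | ξ ω = (ℓ + 1) / s} = ENNReal.ofReal (a * s - ℓ))
    (h₀ : μ {ω | ξ ω = ℓ / s} = 1 - ENNReal.ofReal (a * s - ℓ)) :
    ∫ ω, (ξ ω - a) ^ 2 ∂μ = (a * s - ℓ) * (1 - (a * s - ℓ)) / s ^ 2 := by
  rw [integral_comp_of_measure_eq (fun x => (x - a) ^ 2) hξ (div_lt_add_one_div hs).ne
    (stochRound_prob_mem_Icc hs hlo hhi).1 h₁ h₀]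
  field_simp
  ring

theorem stochRound_variance_le (hs : 0 < s) (hℓ : 0 ≤ ℓ) (hlo : ℓ / s ≤ a)
    (hhi : a ≤ (ℓ + 1) / s) :
    (a * s - ℓ) * (1 - (a * s - ℓ)) / s ^ 2 ≤ min (1 / s ^ 2) (a / s) := by
  obtain ⟨hp₀, hp₁⟩ := stochRound_prob_mem_Icc hs hlo hhi
  have ha : 0 ≤ a := (div_nonneg hℓ hs.le).trans hlo
  have hvar : (a * s - ℓ) * (1 - (a * s - ℓ)) ≤ a * s - ℓ := by nlinarith
  refine le_min ?_ ?_
  · gcongr; nlinarith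
  · calc (a * s - ℓ) * (1 - (a * s - ℓ)) / s ^ 2 ≤ a * s / s ^ 2 :=
        div_le_div_of_nonneg_right (by linarith) (by positivity)
      _ = a / s := by field_simp

end StochasticRounding

theorem stochQuant_variance_bound_general {n : ℕ}
    (v : EuclideanSpace ℝ (Fin n)) (hv : v ≠ 0) (s : ℕ) (hs : 1 ≤ s)
    {Ω : Type*} [MeasurableSpace Ω] (μ : Measure Ω) [IsProbabilityMeasure μ]
    (Qv : Ω → EuclideanSpace ℝ (Fin n)) (hQ : IsStochQuant s μ v Qv) :
    ∫ ω, ‖Qv ω - v‖ ^ 2 ∂μ ≤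
      min ((n : ℝ) / s ^ 2) (Real.sqrt n / s) * ‖v‖ ^ 2 := by
  obtain ⟨ξ, ℓ, hξ, -, -, hbd, h₁, h₀, hQv⟩ := hQ
  have hs' : (0 : ℝ) < s := by exact_mod_cast hs
  set a : Fin n → ℝ := fun i => |v i| / ‖v‖
  have hsum_a : ∑ i, a i ≤ √n := by
    rw [← Finset.sum_div, div_le_iff₀ (norm_pos_iff.2 hv)]
    simpa using EuclideanSpace.sum_abs_le_sqrt_card_mul_norm v
  calc ∫ ω, ‖Qv ω - v‖ ^ 2 ∂μ = ‖v‖ ^ 2 * ∑ i, ∫ ω, (ξ i ω - a i) ^ 2 ∂μ := by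
        simp_rw [EuclideanSpace.norm_sub_sq_eq_of_apply_eq _ hv (hQv _)]
        rw [integral_const_mul, integral_finsetSum _ fun i _ => integrable_comp_of_measure_eq
          (fun x => (x - a i) ^ 2) (hξ i) (div_lt_add_one_div hs').ne (h₁ i) (h₀ i)]
    _ ≤ ‖v‖ ^ 2 * ∑ i, min (1 / (s : ℝ) ^ 2) (a i / s) := by
        gcongr with i
        rw [integral_sq_sub_of_stochRound (hξ i) hs' (hbd i).1 (hbd i).2 (h₁ i) (h₀ i)]
        exact stochRound_variance_le hs' (Nat.cast_nonneg _) (hbd i).1 (hbd i).2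
    _ ≤ ‖v‖ ^ 2 * min ((n : ℝ) / s ^ 2) (√n / s) := by
        gcongr
        refine le_min ((Finset.sum_le_sum fun i _ => min_le_left _ _).trans_eq ?_)
          ((Finset.sum_le_sum fun i _ => min_le_right _ _).trans ?_)
        · simp [div_eq_mul_inv]
        · rw [← Finset.sum_div]; gcongr
    _ = _ := mul_comm _ _

/-- **Variance bound for stochastic quantization:**
`E[‖Q_s(v) − v‖₂²] ≤ min(n/s², √n/s) · ‖v‖₂²`. -/
theorem stochQuant_variance_bound {n : ℕ} (hn : 1 ≤ n)
    (v : EuclideanSpace ℝ (Fin n)) (hv : v ≠ 0) (s : ℕ) (hs : 1 ≤ s)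
    {Ω : Type*} [MeasurableSpace Ω] (μ : Measure Ω) [IsProbabilityMeasure μ]
    (Qv : Ω → EuclideanSpace ℝ (Fin n)) (hQ : IsStochQuant s μ v Qv) :
    ∫ ω, ‖Qv ω - v‖ ^ 2 ∂μ ≤
      min ((n : ℝ) / s ^ 2) (Real.sqrt n / s) * ‖v‖ ^ 2 :=
  stochQuant_variance_bound_general v hv s hs μ Qv hQ
end

section
/- Let n ≥ 1, let v ∈ ℝⁿ be a nonzero vector, and let s ≥ 1 be an integer. Then the second moment of the stochastic quantization Q_s(v) satisfies E[‖Q_s(v)‖₂²] ≤ (1 + min(n/s², √n/s)) · ‖v‖₂². -/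
open MeasureTheory ProbabilityTheory

/-! Each coordinate `ξᵢ` rounds `aᵢ` to one of its two neighbours on the grid `ℤ/s`, with
probabilities making it unbiased; writing `aᵢ = (ℓᵢ + pᵢ)/s`, its second moment is
`aᵢ² + pᵢ(1 − pᵢ)/s²`. The excess `pᵢ(1 − pᵢ)/s²` is at most `1/s²` and, as `pᵢ ≤ aᵢ s`,
at most `aᵢ/s`. Summing over `i`, with `∑ aᵢ² ≤ 1` and hence `∑ aᵢ ≤ √n` by Cauchy–Schwarz,
gives the bound. -/

section TwoPoint

variable {Ω : Type*} [MeasurableSpace Ω] {μ : Measure Ω} [IsProbabilityMeasure μ]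
  {f : Ω → ℝ} {a b p : ℝ}

theorem comp_ae_eq_indicator_of_two_point (hf : Measurable f) (hab : a ≠ b)
    (hb : μ {ω | f ω = b} = ENNReal.ofReal p) (ha : μ {ω | f ω = a} = 1 - ENNReal.ofReal p)
    (g : ℝ → ℝ) :
    (fun ω ↦ g (f ω)) =ᵐ[μ]
      {ω | f ω = a}.indicator (fun _ ↦ g a) + {ω | f ω = b}.indicator (fun _ ↦ g b) := by
  have hp : ENNReal.ofReal p ≤ 1 := hb ▸ prob_le_one
  have hdisj : Disjoint {ω | f ω = a} {ω | f ω = b} :=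
    Set.disjoint_left.mpr fun ω hωa hωb ↦ hab (hωa.symm.trans hωb)
  have hcover : ∀ᵐ ω ∂μ, f ω = a ∨ f ω = b := by
    have hmeas : MeasurableSet {ω | f ω = a ∨ f ω = b} :=
      (hf (measurableSet_singleton a)).union (hf (measurableSet_singleton b))
    rw [ae_iff_measure_eq hmeas.nullMeasurableSet, Set.ofPred_or,
      measure_union hdisj (hf (measurableSet_singleton b)), ha, hb, tsub_add_cancel_of_le hp,
      measure_univ]
  filter_upwards [hcover] with ω hω
  rcases hω with hωa | hωb
  · simp [Set.indicator, hωa, hab]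
  · simp [Set.indicator, hωb, hab.symm]

theorem integrable_comp_of_two_point (hf : Measurable f) (hab : a ≠ b)
    (hb : μ {ω | f ω = b} = ENNReal.ofReal p) (ha : μ {ω | f ω = a} = 1 - ENNReal.ofReal p)
    (g : ℝ → ℝ) :
    Integrable (fun ω ↦ g (f ω)) μ :=
  (((integrable_const (g a)).indicator (hf (measurableSet_singleton a))).add
    ((integrable_const (g b)).indicator (hf (measurableSet_singleton b)))).congr
    (comp_ae_eq_indicator_of_two_point hf hab hb ha g).symm

theorem integral_comp_of_two_point (hf : Measurable f) (hab : a ≠ b) (hp : 0 ≤ p)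
    (hb : μ {ω | f ω = b} = ENNReal.ofReal p) (ha : μ {ω | f ω = a} = 1 - ENNReal.ofReal p)
    (g : ℝ → ℝ) :
    ∫ ω, g (f ω) ∂μ = p * g b + (1 - p) * g a := by
  have hp1 : p ≤ 1 := ENNReal.ofReal_le_one.mp (hb ▸ prob_le_one)
  have hmeas_a : MeasurableSet {ω | f ω = a} := hf (measurableSet_singleton a)
  have hmeas_b : MeasurableSet {ω | f ω = b} := hf (measurableSet_singleton b)
  rw [integral_congr_ae (comp_ae_eq_indicator_of_two_point hf hab hb ha g),
    integral_add' ((integrable_const _).indicator hmeas_a) ((integrable_const _).indicator hmeas_b),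
    integral_indicator_const _ hmeas_a, integral_indicator_const _ hmeas_b,
    measureReal_def, measureReal_def, ha, hb,
    ENNReal.toReal_sub_of_le (ENNReal.ofReal_le_one.mpr hp1) ENNReal.one_ne_top,
    ENNReal.toReal_one, ENNReal.toReal_ofReal hp, smul_eq_mul, smul_eq_mul]
  ring

end TwoPoint

theorem stochRound_sq_mean_le {s x ℓ : ℝ} (hs : 0 < s) (hℓ : 0 ≤ ℓ) (hlo : ℓ / s ≤ x)
    (hhi : x ≤ (ℓ + 1) / s) :
    (x * s - ℓ) * ((ℓ + 1) / s) ^ 2 + (1 - (x * s - ℓ)) * (ℓ / s) ^ 2 ≤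
      x ^ 2 + min (1 / s ^ 2) (x / s) := by
  rw [div_le_iff₀ hs] at hlo
  rw [le_div_iff₀ hs] at hhi
  set p := x * s - ℓ with hp
  have hx : x = (ℓ + p) / s := by rw [hp]; field_simp; ring
  have hmoment : p * ((ℓ + 1) / s) ^ 2 + (1 - p) * (ℓ / s) ^ 2 = x ^ 2 + p * (1 - p) / s ^ 2 := by
    rw [hx]; field_simp; ring
  rw [hmoment, add_le_add_iff_left, le_min_iff, div_le_div_iff_of_pos_right (by positivity),
    div_le_div_iff₀ (by positivity) hs]
  have hvar : p * (1 - p) ≤ x * s := by nlinarith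
  constructor <;> nlinarith [mul_le_mul_of_nonneg_right hvar hs.le]

theorem sum_sq_add_min_le {ι : Type*} [Fintype ι] {a : ι → ℝ} (hsq : ∑ i, a i ^ 2 ≤ 1) (c : ℝ)
    {s : ℝ} (hs : 0 ≤ s) :
    ∑ i, (a i ^ 2 + min c (a i / s)) ≤ 1 + min (Fintype.card ι * c) (√(Fintype.card ι) / s) := by
  have hsum : ∑ i, a i ≤ √(Fintype.card ι) :=
    calc ∑ i, a i ≤ |∑ i, a i| := le_abs_self _
      _ ≤ √(Fintype.card ι) := Real.abs_le_sqrt <| sq_sum_le_card_mul_sum_sq.trans <|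
          mul_le_of_le_one_right (Nat.cast_nonneg _) hsq
  rw [Finset.sum_add_distrib]
  gcongr
  refine le_min ?_ ?_
  · calc ∑ i, min c (a i / s) ≤ ∑ _i : ι, c := Finset.sum_le_sum fun i _ ↦ min_le_left _ _
      _ = Fintype.card ι * c := by simp
  · calc ∑ i, min c (a i / s) ≤ ∑ i, a i / s := Finset.sum_le_sum fun i _ ↦ min_le_right _ _
      _ = (∑ i, a i) / s := (Finset.sum_div ..).symm
      _ ≤ √(Fintype.card ι) / s := by gcongr

theorem sum_sq_div_norm_le_one {ι : Type*} [Fintype ι] (v : EuclideanSpace ℝ ι) :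
    ∑ i, (|v i| / ‖v‖) ^ 2 ≤ 1 := by
  simp_rw [← Real.norm_eq_abs, div_pow, ← Finset.sum_div, ← EuclideanSpace.norm_sq_eq]
  exact div_self_le_one _

theorem IsStochQuant.integral_norm_sq_le {n s : ℕ} (hs : 1 ≤ s) {Ω : Type*} [MeasurableSpace Ω]
    {μ : Measure Ω} [IsProbabilityMeasure μ] {v : EuclideanSpace ℝ (Fin n)}
    {Qv : Ω → EuclideanSpace ℝ (Fin n)} (hQ : IsStochQuant s μ v Qv) :
    ∫ ω, ‖Qv ω‖ ^ 2 ∂μ ≤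
      ‖v‖ ^ 2 * ∑ i, ((|v i| / ‖v‖) ^ 2 + min (1 / (s : ℝ) ^ 2) (|v i| / ‖v‖ / s)) := by
  obtain ⟨ξ, ℓ, hmeas, -, -, hbounds, hhi, hlo, hQeq⟩ := hQ
  have hspos : (0 : ℝ) < s := by exact_mod_cast hs
  have hp (i : Fin n) : 0 ≤ |v i| / ‖v‖ * s - ℓ i := by
    have := (div_le_iff₀ hspos).mp (hbounds i).1; linarith
  have hne (i : Fin n) : (ℓ i : ℝ) / s ≠ (ℓ i + 1) / s := by
    rw [Ne, div_left_inj' hspos.ne']; linarith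
  have hnorm ω : ‖Qv ω‖ ^ 2 = ∑ i, ‖v‖ ^ 2 * ξ i ω ^ 2 := by
    rw [EuclideanSpace.norm_sq_eq]
    simp_rw [Real.norm_eq_abs, sq_abs, hQeq]
    refine Finset.sum_congr rfl fun i _ ↦ ?_
    split_ifs <;> ring
  simp_rw [hnorm]
  rw [integral_finsetSum _ fun i _ ↦
    (integrable_comp_of_two_point (hmeas i) (hne i) (hhi i) (hlo i) (· ^ 2)).const_mul _,
    Finset.mul_sum]
  gcongr with i
  rw [integral_const_mul,
    integral_comp_of_two_point (hmeas i) (hne i) (hp i) (hhi i) (hlo i) (· ^ 2)]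
  gcongr ‖v‖ ^ 2 * ?_
  exact stochRound_sq_mean_le hspos (Nat.cast_nonneg _) (hbounds i).1 (hbounds i).2

theorem stochQuant_second_moment_general {n : ℕ}
    (v : EuclideanSpace ℝ (Fin n)) (s : ℕ) (hs : 1 ≤ s)
    {Ω : Type*} [MeasurableSpace Ω] (μ : Measure Ω) [IsProbabilityMeasure μ]
    (Qv : Ω → EuclideanSpace ℝ (Fin n)) (hQ : IsStochQuant s μ v Qv) :
    ∫ ω, ‖Qv ω‖ ^ 2 ∂μ ≤
      (1 + min ((n : ℝ) / s ^ 2) (Real.sqrt n / s)) * ‖v‖ ^ 2 := by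
  have hsum := sum_sq_add_min_le (sum_sq_div_norm_le_one v) (1 / (s : ℝ) ^ 2) (Nat.cast_nonneg s)
  rw [Fintype.card_fin, mul_one_div] at hsum
  calc ∫ ω, ‖Qv ω‖ ^ 2 ∂μ ≤ _ := hQ.integral_norm_sq_le hs
    _ ≤ ‖v‖ ^ 2 * (1 + min ((n : ℝ) / s ^ 2) (Real.sqrt n / s)) := by gcongr
    _ = _ := mul_comm _ _

/-- **Second moment bound for stochastic quantization:**
`E[‖Q_s(v)‖₂²] ≤ (1 + min(n/s², √n/s)) · ‖v‖₂²`. -/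
theorem stochQuant_second_moment {n : ℕ} (hn : 1 ≤ n)
    (v : EuclideanSpace ℝ (Fin n)) (hv : v ≠ 0) (s : ℕ) (hs : 1 ≤ s)
    {Ω : Type*} [MeasurableSpace Ω] (μ : Measure Ω) [IsProbabilityMeasure μ]
    (Qv : Ω → EuclideanSpace ℝ (Fin n)) (hQ : IsStochQuant s μ v Qv) :
    ∫ ω, ‖Qv ω‖ ^ 2 ∂μ ≤
      (1 + min ((n : ℝ) / s ^ 2) (Real.sqrt n / s)) * ‖v‖ ^ 2 :=
  stochQuant_second_moment_general v s hs μ Qv hQ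
end

section
/- For every n ≥ 1 and every vector v ∈ ℝⁿ, there exists a set S ⊆ {1, …, n} of indices with |S| ≤ ⌈√n⌉ such that Σ_{i ∈ S} |v_i| ≥ ‖v‖₂. Equivalently, if the coordinates satisfy |v_1| ≥ |v_2| ≥ … ≥ |v_n| and D is an integer with D ≥ √n and D ≤ n, then Σ_{i=1}^D |v_i| ≥ ‖v‖₂. -/
lemma heavy_card_filter (n D : ℕ) (h : D ≤ n) :
    (Finset.univ.filter (fun i : Fin n => (i : ℕ) < D)).card = D := by
  have : (Finset.univ.filter (fun i : Fin n => (i : ℕ) < D))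
      = Finset.map ⟨Fin.castLE h, Fin.castLE_injective h⟩ Finset.univ := by
    ext i
    simp only [Finset.mem_filter, Finset.mem_univ, true_and, Finset.mem_map,
      Function.Embedding.coeFn_mk]
    constructor
    · intro hi
      exact ⟨⟨i, hi⟩, rfl⟩
    · rintro ⟨j, rfl⟩
      exact j.isLt
  rw [this, Finset.card_map, Finset.card_univ, Fintype.card_fin]

/-- Key lemma: for a vector whose absolute values are (weakly) decreasing,
the sum of the `D` largest absolute values dominates the ℓ² norm, provided
`√n ≤ D ≤ n`. -/
lemma heavy_key (n : ℕ) (hn : 1 ≤ n) (w : Fin n → ℝ)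
    (hmono : ∀ i j : Fin n, i ≤ j → |w j| ≤ |w i|) (D : ℕ)
    (hD1 : Real.sqrt n ≤ D) (hD2 : D ≤ n) :
    Real.sqrt (∑ i, (w i) ^ 2) ≤
      ∑ i ∈ Finset.univ.filter (fun i : Fin n => (i : ℕ) < D), |w i| := by
  have hD0 : 1 ≤ D := by
    by_contra h
    push_neg at h
    interval_cases D
    have : Real.sqrt n ≤ 0 := by simpa using hD1
    have h1 : (1 : ℝ) ≤ Real.sqrt n := by
      rw [show (1:ℝ) = Real.sqrt 1 by simp]
      exact Real.sqrt_le_sqrt (by exact_mod_cast hn)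
    linarith
  have hnD2 : (n : ℝ) ≤ (D : ℝ) * D := by
    have := Real.sq_sqrt (by positivity : (0:ℝ) ≤ (n:ℝ))
    nlinarith [Real.sqrt_nonneg (n:ℝ)]
  have hnD2' : n ≤ D * D := by exact_mod_cast hnD2
  set A : Finset (Fin n) := Finset.univ.filter (fun i : Fin n => (i : ℕ) < D) with hA
  set B : Finset (Fin n) := Finset.univ.filter (fun i : Fin n => ¬ (i : ℕ) < D) with hB
  have hcardA : A.card = D := heavy_card_filter n D hD2
  have hcardB : B.card = n - D := by
    have : A.card + B.card = n := by
      rw [hA, hB, Finset.card_filter_add_card_filter_not, Finset.card_univ,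
        Fintype.card_fin]
    omega
  -- the pivot coordinate
  have hDlt : D - 1 < n := by omega
  set d : Fin n := ⟨D - 1, hDlt⟩ with hd
  set m : ℝ := |w d| with hm
  have hm0 : 0 ≤ m := abs_nonneg _
  set T : ℝ := ∑ i ∈ A, |w i| with hT
  have hT0 : 0 ≤ T := Finset.sum_nonneg fun i _ => abs_nonneg _
  -- every coordinate in A is at least m
  have hAm : ∀ i ∈ A, m ≤ |w i| := by
    intro i hi
    have hiD : (i : ℕ) < D := (Finset.mem_filter.mp hi).2
    have hle : (i : ℕ) ≤ D - 1 := by omega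
    exact hmono i d (by rw [Fin.le_def, hd]; exact hle)
  -- every coordinate in B is at most m
  have hBm : ∀ i ∈ B, |w i| ≤ m := by
    intro i hi
    have hiD : ¬ (i : ℕ) < D := (Finset.mem_filter.mp hi).2
    have hle : D - 1 ≤ (i : ℕ) := by omega
    exact hmono d i (by rw [Fin.le_def, hd]; exact hle)
  have hTm : (D : ℝ) * m ≤ T := by
    have := Finset.card_nsmul_le_sum A (fun i => |w i|) m hAm
    rw [hcardA] at this
    simpa [nsmul_eq_mul] using this
  -- lower bound for T against each coordinate
  have hTi : ∀ i ∈ A, |w i| + ((D : ℝ) - 1) * m ≤ T := by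
    intro i hi
    have hsplit : T = |w i| + ∑ j ∈ A.erase i, |w j| :=
      (Finset.add_sum_erase A (fun j => |w j|) hi).symm
    have hcard' : (A.erase i).card = D - 1 := by rw [Finset.card_erase_of_mem hi, hcardA]
    have hle : ((A.erase i).card : ℝ) * m ≤ ∑ j ∈ A.erase i, |w j| := by
      have := Finset.card_nsmul_le_sum (A.erase i) (fun j => |w j|) m
        (fun j hj => hAm j (Finset.mem_of_mem_erase hj))
      simpa [nsmul_eq_mul] using this
    rw [hcard'] at hle
    have hcast : ((D - 1 : ℕ) : ℝ) = (D : ℝ) - 1 := by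
      have := Nat.cast_sub hD0 (R := ℝ)
      simpa using this
    rw [hcast] at hle
    linarith
  set S1 : ℝ := ∑ i ∈ A, (w i) ^ 2 with hS1
  set S2 : ℝ := ∑ i ∈ B, (w i) ^ 2 with hS2
  have hsum : ∑ i, (w i) ^ 2 = S1 + S2 := by
    rw [hS1, hS2, hA, hB]
    exact (Finset.sum_filter_add_sum_filter_not _ _ _).symm
  -- T^2 ≥ S1 + (D-1) m T
  have hT2 : S1 + ((D : ℝ) - 1) * m * T ≤ T * T := by
    have : ∑ i ∈ A, |w i| * (|w i| + ((D : ℝ) - 1) * m) ≤ ∑ i ∈ A, |w i| * T := by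
      apply Finset.sum_le_sum
      intro i hi
      exact mul_le_mul_of_nonneg_left (hTi i hi) (abs_nonneg _)
    calc S1 + ((D : ℝ) - 1) * m * T
        ≤ S1 + ((D : ℝ) - 1) * m * Finset.sum A (fun i => |w i|) := by
          rw [← hT]
      _ = ∑ i ∈ A, |w i| * (|w i| + ((D : ℝ) - 1) * m) := by
          rw [hS1, Finset.mul_sum, ← Finset.sum_add_distrib]
          apply Finset.sum_congr rfl
          intro i _
          rw [← sq_abs]
          ring
      _ ≤ ∑ i ∈ A, |w i| * T := this
      _ = T * T := by rw [← Finset.sum_mul, ← hT, mul_comm]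
  -- S2 ≤ (n - D) m^2
  have hS2le : S2 ≤ ((n : ℝ) - D) * (m * m) := by
    have h1 : S2 ≤ ∑ _i ∈ B, m * m := by
      apply Finset.sum_le_sum
      intro i hi
      have := hBm i hi
      have h0 : 0 ≤ |w i| := abs_nonneg _
      nlinarith [sq_abs (w i)]
    have h2 : ∑ _i ∈ B, m * m = ((n - D : ℕ) : ℝ) * (m * m) := by
      rw [Finset.sum_const, hcardB, nsmul_eq_mul]
    have h3 : ((n - D : ℕ) : ℝ) = (n : ℝ) - D := by
      have := Nat.cast_sub hD2 (R := ℝ)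
      simpa using this
    rw [h2, h3] at h1
    exact h1
  -- combine
  have hfinal : ∑ i, (w i) ^ 2 ≤ T * T := by
    have hDn : (1 : ℝ) ≤ (D : ℝ) := by exact_mod_cast hD0
    have hDle : (D : ℝ) ≤ (n : ℝ) := by exact_mod_cast hD2
    have key : ((n : ℝ) - D) * (m * m) ≤ ((D : ℝ) - 1) * m * ((D : ℝ) * m) := by
      have : (n : ℝ) - D ≤ ((D : ℝ) - 1) * D := by nlinarith
      nlinarith
    have step : ((D : ℝ) - 1) * m * ((D : ℝ) * m) ≤ ((D : ℝ) - 1) * m * T := by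
      apply mul_le_mul_of_nonneg_left hTm
      have hDn : (1 : ℝ) ≤ (D : ℝ) := by exact_mod_cast hD0
      exact mul_nonneg (by linarith) hm0
    rw [hsum]
    linarith
  calc Real.sqrt (∑ i, (w i) ^ 2) ≤ Real.sqrt (T * T) := Real.sqrt_le_sqrt hfinal
    _ = T := Real.sqrt_mul_self hT0

/-- **At most `√n` heavy coordinates suffice to dominate the Euclidean norm.**
For every `v ∈ ℝⁿ` there is a set `S` of at most `⌈√n⌉` indices with
`∑_{i ∈ S} |vᵢ| ≥ ‖v‖₂`; equivalently, if the coordinates are sorted by decreasing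
absolute value and `√n ≤ D ≤ n`, then the `D` largest absolute values sum to
at least `‖v‖₂`. -/
theorem heavy_coordinates (n : ℕ) (hn : 1 ≤ n) (v : EuclideanSpace ℝ (Fin n)) :
    (∃ S : Finset (Fin n), S.card ≤ ⌈Real.sqrt n⌉₊ ∧ ‖v‖ ≤ ∑ i ∈ S, |v i|) ∧
    (∀ (_ : ∀ i j : Fin n, i ≤ j → |v j| ≤ |v i|) (D : ℕ),
        Real.sqrt n ≤ D → D ≤ n →
        ‖v‖ ≤ ∑ i ∈ Finset.univ.filter (fun i : Fin n => (i : ℕ) < D), |v i|) := by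
  have hnorm : ‖v‖ = Real.sqrt (∑ i, (v i) ^ 2) := by
    rw [EuclideanSpace.norm_eq]
    congr 1
    apply Finset.sum_congr rfl
    intro i _
    rw [Real.norm_eq_abs, sq_abs]
  constructor
  · -- existence part: sort the coordinates
    set σ : Equiv.Perm (Fin n) := Tuple.sort (fun i => -|v i|) with hσ
    set w : Fin n → ℝ := fun i => v (σ i) with hw
    have hmono : ∀ i j : Fin n, i ≤ j → |w j| ≤ |w i| := by
      intro i j hij
      have := Tuple.monotone_sort (fun i => -|v i|) hij
      simp only [Function.comp_apply] at this
      rw [hw]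
      linarith
    set D : ℕ := ⌈Real.sqrt n⌉₊ with hD
    have hD1 : Real.sqrt n ≤ D := Nat.le_ceil _
    have hD2 : D ≤ n := by
      rw [hD, Nat.ceil_le]
      calc Real.sqrt n ≤ Real.sqrt ((n : ℝ) * n) := by
            apply Real.sqrt_le_sqrt
            nlinarith [(Nat.one_le_cast (α := ℝ)).mpr hn]
        _ = n := Real.sqrt_mul_self (by positivity)
    set A : Finset (Fin n) := Finset.univ.filter (fun i : Fin n => (i : ℕ) < D) with hA
    refine ⟨A.image σ, ?_, ?_⟩
    · calc (A.image σ).card ≤ A.card := Finset.card_image_le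
        _ = D := heavy_card_filter n D hD2
    · have hkey := heavy_key n hn w hmono D hD1 hD2
      have hsum : ∑ i, (w i) ^ 2 = ∑ i, (v i) ^ 2 := Equiv.sum_comp σ (fun i => (v i) ^ 2)
      have himg : ∑ i ∈ A.image σ, |v i| = ∑ i ∈ A, |w i| := by
        rw [Finset.sum_image (fun a _ b _ h => σ.injective h)]
      rw [hnorm, ← hsum, himg]
      exact hkey
  · intro hmono D hD1 hD2
    rw [hnorm]
    exact heavy_key n hn v hmono D hD1 hD2
end

section
/- Let f: ℝⁿ → ℝ be differentiable, convex, ℓ-strongly convex with ℓ > 0, and with L-Lipschitz gradient, and let x* be its global minimizer. Let x ∈ ℝⁿ, let q ∈ ℝⁿ satisfy ⟨∇f(x), q⟩ ≥ ‖∇f(x)‖₂² and ‖q‖₂² ≤ √n · ‖∇f(x)‖₂², and let x' = x − η·q where 0 < η ≤ 1/(L√n). Then f(x') − f(x*) ≤ (1 − η·ℓ/2 + 2η²·L²·√n) · (f(x) − f(x*)). -/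
open scoped RealInnerProductSpace

/-!
By the descent lemma for an `L`-smooth function, the two conditions on `q` and `η L √n ≤ 1`
give `f x' ≤ f x - η / 2 * ‖∇f x‖²`. Minimising the strong-convexity lower bound over `y`
gives the Polyak–Łojasiewicz inequality `2 ℓ (f x - f x*) ≤ ‖∇f x‖²`. Together they contract the
optimality gap by the factor `1 - η ℓ`, which is at most the claimed one.
-/

section Smooth

variable {E : Type*} [NormedAddCommGroup E] [InnerProductSpace ℝ E] [CompleteSpace E]
  {f : E → ℝ}

theorem HasGradientAt.hasDerivAt_comp_add_smul {g a v : E} {t : ℝ}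
    (h : HasGradientAt f g (a + t • v)) :
    HasDerivAt (fun s : ℝ => f (a + s • v)) ⟪g, v⟫ t := by
  have hline : HasDerivAt (fun s : ℝ => a + s • v) v t := by
    simpa using ((hasDerivAt_id t).smul_const v).const_add a
  simpa [Function.comp_def] using h.hasFDerivAt.comp_hasDerivAt t hline

theorem inner_gradient_sub_le_of_lipschitzWith {L : NNReal} (hL : LipschitzWith L (gradient f))
    (a v : E) {t : ℝ} (ht : 0 ≤ t) :
    ⟪gradient f (a + t • v) - gradient f a, v⟫ ≤ L * t * ‖v‖ ^ 2 := by
  have hlip : ‖gradient f (a + t • v) - gradient f a‖ ≤ L * (t * ‖v‖) := by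
    simpa [← dist_eq_norm, norm_smul, abs_of_nonneg ht] using hL.dist_le_mul (a + t • v) a
  calc ⟪gradient f (a + t • v) - gradient f a, v⟫
      ≤ ‖gradient f (a + t • v) - gradient f a‖ * ‖v‖ := real_inner_le_norm _ _
    _ ≤ L * (t * ‖v‖) * ‖v‖ := by gcongr
    _ = L * t * ‖v‖ ^ 2 := by ring

theorem le_add_inner_gradient_add_of_lipschitzWith (hf : Differentiable ℝ f) {L : NNReal}
    (hL : LipschitzWith L (gradient f)) (a b : E) :
    f b ≤ f a + ⟪gradient f a, b - a⟫ + L / 2 * ‖b - a‖ ^ 2 := by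
  set v := b - a
  let φ : ℝ → ℝ := fun t => f (a + t • v) - t * ⟪gradient f a, v⟫ - L / 2 * t ^ 2 * ‖v‖ ^ 2
  have hφ : ∀ t, HasDerivAt φ
      (⟪gradient f (a + t • v) - gradient f a, v⟫ - L * t * ‖v‖ ^ 2) t := by
    intro t
    have hquad := ((hasDerivAt_pow 2 t).const_mul ((L : ℝ) / 2)).mul_const (‖v‖ ^ 2)
    refine ((((hf _).hasGradientAt.hasDerivAt_comp_add_smul).sub
      (hasDerivAt_mul_const ⟪gradient f a, v⟫)).sub hquad).congr_deriv ?_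
    rw [inner_sub_left, Nat.add_one_sub_one, pow_one, Nat.cast_ofNat]
    ring
  have hanti : AntitoneOn φ (Set.Icc 0 1) := by
    refine antitoneOn_of_hasDerivWithinAt_nonpos (convex_Icc 0 1)
      (fun t _ => (hφ t).continuousAt.continuousWithinAt)
      (fun t _ => (hφ t).hasDerivWithinAt) fun t ht => ?_
    rw [interior_Icc] at ht
    exact sub_nonpos.mpr (inner_gradient_sub_le_of_lipschitzWith hL a v ht.1.le)
  have h01 : φ 1 ≤ φ 0 := hanti (by norm_num) (by norm_num) zero_le_one
  simp only [φ, v, one_smul, zero_smul, add_zero, add_sub_cancel] at h01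
  linarith

theorem apply_sub_smul_le_of_lipschitzWith_gradient (hf : Differentiable ℝ f) {L : NNReal}
    (hL : LipschitzWith L (gradient f)) {x q : E} {c η : ℝ}
    (hq1 : ‖gradient f x‖ ^ 2 ≤ ⟪gradient f x, q⟫) (hq2 : ‖q‖ ^ 2 ≤ c * ‖gradient f x‖ ^ 2)
    (hη0 : 0 ≤ η) (hη : η ≤ 1 / (L * c)) :
    f (x - η • q) ≤ f x - η / 2 * ‖gradient f x‖ ^ 2 := by
  have hdesc := le_add_inner_gradient_add_of_lipschitzWith hf hL x (x - η • q)
  rw [sub_sub_cancel_left, inner_neg_right, real_inner_smul_right, norm_neg, norm_smul,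
    Real.norm_eq_abs, mul_pow, sq_abs] at hdesc
  have hηLc : η * (L * c) ≤ 1 := by
    rcases le_or_gt (L * c) 0 with hLc | hLc
    · exact (mul_nonpos_of_nonneg_of_nonpos hη0 hLc).trans zero_le_one
    · rwa [le_div_iff₀ hLc] at hη
  calc f (x - η • q)
      ≤ f x - η * ⟪gradient f x, q⟫ + L / 2 * (η ^ 2 * ‖q‖ ^ 2) := by linarith
    _ ≤ f x - η * ‖gradient f x‖ ^ 2 + L / 2 * (η ^ 2 * (c * ‖gradient f x‖ ^ 2)) := by gcongr
    _ = f x - η / 2 * ‖gradient f x‖ ^ 2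
          - (1 - η * (L * c)) * (η / 2 * ‖gradient f x‖ ^ 2) := by ring
    _ ≤ f x - η / 2 * ‖gradient f x‖ ^ 2 :=
      sub_le_self _ (mul_nonneg (sub_nonneg.mpr hηLc) (by positivity))

end Smooth

theorem two_mul_sub_le_norm_sq_of_quadratic_lower_bound {E : Type*} [NormedAddCommGroup E]
    [InnerProductSpace ℝ E] {ℓ fx fy : ℝ} {g x y : E} (hℓ : 0 ≤ ℓ)
    (h : fx + ⟪g, y - x⟫ + ℓ / 2 * ‖y - x‖ ^ 2 ≤ fy) :
    2 * ℓ * (fx - fy) ≤ ‖g‖ ^ 2 := by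
  have hcs : -(‖g‖ * ‖y - x‖) ≤ ⟪g, y - x⟫ := neg_le_of_abs_le (abs_real_inner_le_norm _ _)
  nlinarith [sq_nonneg (ℓ * ‖y - x‖ - ‖g‖)]

theorem quantized_gd_step_general (n : ℕ)
    (f : EuclideanSpace ℝ (Fin n) → ℝ) (hf : Differentiable ℝ f)
    (ℓ : ℝ) (hℓ : 0 < ℓ)
    (hsc : ∀ x y : EuclideanSpace ℝ (Fin n),
      f x + ⟪gradient f x, y - x⟫ + ℓ / 2 * ‖y - x‖ ^ 2 ≤ f y)
    (L : NNReal) (hL : LipschitzWith L (gradient f))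
    (xstar : EuclideanSpace ℝ (Fin n)) (hmin : ∀ y, f xstar ≤ f y)
    (x q : EuclideanSpace ℝ (Fin n))
    (hq1 : ‖gradient f x‖ ^ 2 ≤ ⟪gradient f x, q⟫)
    (hq2 : ‖q‖ ^ 2 ≤ Real.sqrt n * ‖gradient f x‖ ^ 2)
    (η : ℝ) (hη0 : 0 < η) (hη : η ≤ 1 / (L * Real.sqrt n))
    (x' : EuclideanSpace ℝ (Fin n)) (hx' : x' = x - η • q) :
    f x' - f xstar ≤
      (1 - η * ℓ / 2 + 2 * η ^ 2 * (L : ℝ) ^ 2 * Real.sqrt n) * (f x - f xstar) := by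
  have hgap : 0 ≤ f x - f xstar := sub_nonneg.mpr (hmin x)
  have hPL := two_mul_sub_le_norm_sq_of_quadratic_lower_bound hℓ.le (hsc x xstar)
  have hstep : f x' ≤ f x - η / 2 * ‖gradient f x‖ ^ 2 :=
    hx' ▸ apply_sub_smul_le_of_lipschitzWith_gradient hf hL hq1 hq2 hη0.le hη
  have hfactor : 1 - η * ℓ ≤ 1 - η * ℓ / 2 + 2 * η ^ 2 * (L : ℝ) ^ 2 * Real.sqrt n := by
    have : 0 ≤ 2 * η ^ 2 * (L : ℝ) ^ 2 * Real.sqrt n := by positivity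
    linarith [mul_pos hη0 hℓ]
  calc f x' - f xstar ≤ (1 - η * ℓ) * (f x - f xstar) := by
        linarith [mul_le_mul_of_nonneg_left hPL hη0.le]
    _ ≤ _ := mul_le_mul_of_nonneg_right hfactor hgap

/-- **One-step descent bound for quantized gradient descent.**
If `f` is convex, `ℓ`-strongly convex, with `L`-Lipschitz gradient and minimizer `x*`,
`q` satisfies `⟨∇f(x), q⟩ ≥ ‖∇f(x)‖₂²` and `‖q‖₂² ≤ √n ‖∇f(x)‖₂²`, and
`x' = x − η q` with `0 < η ≤ 1/(L√n)`, then
`f(x') − f(x*) ≤ (1 − ηℓ/2 + 2η²L²√n)(f(x) − f(x*))`. -/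
theorem quantized_gd_step (n : ℕ)
    (f : EuclideanSpace ℝ (Fin n) → ℝ) (hf : Differentiable ℝ f)
    (hconv : ConvexOn ℝ Set.univ f)
    (ℓ : ℝ) (hℓ : 0 < ℓ)
    (hsc : ∀ x y : EuclideanSpace ℝ (Fin n),
      f x + ⟪gradient f x, y - x⟫ + ℓ / 2 * ‖y - x‖ ^ 2 ≤ f y)
    (L : NNReal) (hL : LipschitzWith L (gradient f))
    (xstar : EuclideanSpace ℝ (Fin n)) (hmin : ∀ y, f xstar ≤ f y)
    (x q : EuclideanSpace ℝ (Fin n))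
    (hq1 : ‖gradient f x‖ ^ 2 ≤ ⟪gradient f x, q⟫)
    (hq2 : ‖q‖ ^ 2 ≤ Real.sqrt n * ‖gradient f x‖ ^ 2)
    (η : ℝ) (hη0 : 0 < η) (hη : η ≤ 1 / (L * Real.sqrt n))
    (x' : EuclideanSpace ℝ (Fin n)) (hx' : x' = x - η • q) :
    f x' - f xstar ≤
      (1 - η * ℓ / 2 + 2 * η ^ 2 * (L : ℝ) ^ 2 * Real.sqrt n) * (f x - f xstar) :=
  quantized_gd_step_general n f hf ℓ hℓ hsc L hL xstar hmin x q hq1 hq2 η hη0 hη x' hx'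
end

section
/- Let f = (1/m) Σ_{i=1}^m f_i, where f is ℓ-strongly convex with ℓ > 0 and each f_i: ℝⁿ → ℝ is convex, differentiable, and has L-Lipschitz gradient, and let x* be the unique minimizer of f over ℝⁿ. Let Q be a random map on ℝⁿ such that for every w ∈ ℝⁿ, E[Q(w)] = w and E[‖Q(w)‖₂²] ≤ 2‖w‖₂², and let j be a uniformly random index in {1, …, m} independent of the randomness of Q. Then for all x, y ∈ ℝⁿ, the quantized SVRG update vector v = Q( ∇f_j(x) − ∇f_j(y) + ∇f(y) ) satisfies E[‖v‖₂²] ≤ 16·L·( f(x) − f(x*) + f(y) − f(x*) ). -/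
open MeasureTheory ProbabilityTheory
open scoped RealInnerProductSpace

/-!
For a convex `g` with `L`-Lipschitz gradient, the descent bound at `z` and the tangent bound at `w`,
both evaluated at `z - (∇g z - ∇g w) / L`, give co-coercivity:
`‖∇g z - ∇g w‖² ≤ 2L (g z - g w - ⟪∇g w, z - w⟫)`. Summed over the `fᵢ` at the minimizer `x*`,
where `∑ ∇fᵢ x* = 0` kills the linear terms, the mean of `‖∇fᵢ z - ∇fᵢ x*‖²` is at most
`2L (f z - f x*)`. The SVRG direction is `aⱼ - (bⱼ - mean b)` with `aⱼ = ∇fⱼ x - ∇fⱼ x*` and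
`bⱼ = ∇fⱼ y - ∇fⱼ x*`; centering does not increase a second moment, so its second moment is at most
`4L (f x - f x* + f y - f x*)`, and the quantization multiplies this by at most `2`.
-/

theorem sum_norm_sub_average_sq_le {E ι : Type*} [NormedAddCommGroup E] [InnerProductSpace ℝ E]
    [Fintype ι] (b : ι → E) :
    ∑ i, ‖b i - (Fintype.card ι : ℝ)⁻¹ • ∑ j, b j‖ ^ 2 ≤ ∑ i, ‖b i‖ ^ 2 := by
  have hk : 0 ≤ (Fintype.card ι : ℝ)⁻¹ := by positivity
  have hexpand : ∑ i, ‖b i - (Fintype.card ι : ℝ)⁻¹ • ∑ j, b j‖ ^ 2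
      = ∑ i, ‖b i‖ ^ 2 - (Fintype.card ι : ℝ)⁻¹ * ‖∑ j, b j‖ ^ 2 := by
    simp only [norm_sub_sq_real, Finset.sum_add_distrib, Finset.sum_sub_distrib, ← Finset.mul_sum,
      ← sum_inner, Finset.sum_const, Finset.card_univ, nsmul_eq_mul, real_inner_smul_right,
      real_inner_self_eq_norm_sq, norm_smul, Real.norm_of_nonneg hk]
    rcases eq_or_ne (Fintype.card ι : ℝ) 0 with h | h
    · simp [h]
    · field_simp
      ring
  rw [hexpand]
  linarith [mul_nonneg hk (sq_nonneg ‖∑ j, b j‖)]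

section Gradient

variable {E : Type*} [NormedAddCommGroup E] [InnerProductSpace ℝ E] [CompleteSpace E]
  {g : E → ℝ}

theorem HasGradientAt.sum {ι : Type*} {s : Finset ι} {f : ι → E → ℝ} {f' : ι → E} {x : E}
    (h : ∀ i ∈ s, HasGradientAt (f i) (f' i) x) :
    HasGradientAt (fun y => ∑ i ∈ s, f i y) (∑ i ∈ s, f' i) x := by
  simp only [hasGradientAt_iff_hasFDerivAt, map_sum] at h ⊢
  exact HasFDerivAt.fun_sum h

theorem HasGradientAt.const_mul {g' x : E} (h : HasGradientAt g g' x) (c : ℝ) :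
    HasGradientAt (fun y => c * g y) (c • g') x := by
  rw [hasGradientAt_iff_hasFDerivAt] at h ⊢
  simpa using h.const_mul c

theorem IsLocalMin.gradient_eq_zero {x : E} (h : IsLocalMin g x) : gradient g x = 0 := by
  simp [gradient, h.fderiv_eq_zero]

theorem DifferentiableAt.hasDerivAt_add_smul {w v : E} {t : ℝ}
    (hg : DifferentiableAt ℝ g (w + t • v)) :
    HasDerivAt (fun s : ℝ => g (w + s • v)) ⟪gradient g (w + t • v), v⟫ t := by
  have hline : HasDerivAt (fun s : ℝ => w + s • v) v t := by
    simpa using ((hasDerivAt_id t).smul_const v).const_add w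
  simpa [Function.comp_def, ← inner_gradient_left] using hg.hasFDerivAt.comp_hasDerivAt t hline

theorem ConvexOn.add_inner_gradient_le (hconv : ConvexOn ℝ Set.univ g) {w : E}
    (hg : DifferentiableAt ℝ g w) (u : E) : g w + ⟪gradient g w, u - w⟫ ≤ g u := by
  have hline : ConvexOn ℝ Set.univ fun t : ℝ => g (w + t • (u - w)) := by
    have := hconv.comp_affineMap (AffineMap.lineMap w u)
    simp only [Set.preimage_univ, Function.comp_def, AffineMap.lineMap_apply_module'] at this
    simpa only [add_comm] using this
  have hderiv : HasDerivAt (fun t : ℝ => g (w + t • (u - w))) ⟪gradient g w, u - w⟫ 0 := by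
    simpa only [zero_smul, add_zero] using
      (show DifferentiableAt ℝ g (w + (0 : ℝ) • (u - w)) by simpa using hg).hasDerivAt_add_smul
  have hslope := hline.le_slope_of_hasDerivAt (Set.mem_univ 0) (Set.mem_univ 1) one_pos hderiv
  simp only [slope_def_field, zero_smul, add_zero, one_smul, sub_zero, div_one,
    add_sub_cancel] at hslope
  linarith

theorem LipschitzWith.apply_le_add_inner_gradient_add_sq (hg : Differentiable ℝ g) {L : NNReal}
    (hL : LipschitzWith L (gradient g)) (z u : E) :
    g u ≤ g z + ⟪gradient g z, u - z⟫ + L / 2 * ‖u - z‖ ^ 2 := by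
  set v := u - z
  set φ : ℝ → ℝ := fun t => g (z + t • v) - (t * ⟪gradient g z, v⟫ + L / 2 * ‖v‖ ^ 2 * t ^ 2)
  have hφ : ∀ t, HasDerivAt φ
      (⟪gradient g (z + t • v), v⟫ - (⟪gradient g z, v⟫ + L / 2 * ‖v‖ ^ 2 * (2 * t))) t := by
    intro t
    have h := (hg (z + t • v)).hasDerivAt_add_smul.fun_sub
      (((hasDerivAt_id' t).mul_const ⟪gradient g z, v⟫).fun_add
        ((hasDerivAt_pow 2 t).const_mul (L / 2 * ‖v‖ ^ 2)))
    exact h.congr_deriv (by push_cast; ring)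
  have hφ' : ∀ t ∈ interior (Set.Ici (0 : ℝ)),
      ⟪gradient g (z + t • v), v⟫ - (⟪gradient g z, v⟫ + L / 2 * ‖v‖ ^ 2 * (2 * t)) ≤ 0 := by
    intro t ht
    rw [interior_Ici, Set.mem_Ioi] at ht
    have hlip : ‖gradient g (z + t • v) - gradient g z‖ ≤ L * (t * ‖v‖) := by
      simpa [norm_smul, abs_of_pos ht] using hL.norm_sub_le (z + t • v) z
    have := real_inner_le_norm (gradient g (z + t • v) - gradient g z) v
    rw [inner_sub_left] at this
    nlinarith [mul_le_mul_of_nonneg_right hlip (norm_nonneg v)]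
  have hanti : AntitoneOn φ (Set.Ici 0) :=
    antitoneOn_of_hasDerivWithinAt_nonpos (convex_Ici 0)
      (fun t _ => (hφ t).continuousAt.continuousWithinAt)
      (fun t _ => (hφ t).hasDerivWithinAt) hφ'
  have := hanti (Set.mem_Ici.2 le_rfl) (Set.mem_Ici.2 zero_le_one) zero_le_one
  simp only [φ, v, zero_smul, one_smul, add_zero, add_sub_cancel, zero_mul, one_mul, one_pow,
    mul_one] at this
  linarith

theorem ConvexOn.norm_gradient_sub_sq_le (hconv : ConvexOn ℝ Set.univ g) (hg : Differentiable ℝ g)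
    {L : NNReal} (hL : LipschitzWith L (gradient g)) (w z : E) :
    ‖gradient g z - gradient g w‖ ^ 2 ≤ 2 * L * (g z - g w - ⟪gradient g w, z - w⟫) := by
  rcases eq_zero_or_pos L with rfl | hLpos
  · have : gradient g z = gradient g w := by simpa using hL.dist_le_mul z w
    simp [this]
  set d := gradient g z - gradient g w
  -- `u` is the gradient step of length `1 / L` from `z` for `g - ⟪∇g w, ·⟫`
  set u := z - (L : ℝ)⁻¹ • d
  have hdescent := hL.apply_le_add_inner_gradient_add_sq hg z u
  have htangent := hconv.add_inner_gradient_le (hg w) u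
  have huz : u - z = -((L : ℝ)⁻¹ • d) := by simp [u]
  have huw : u - w = (z - w) - (L : ℝ)⁻¹ • d := by simp only [u]; abel
  have hd : ⟪gradient g z, d⟫ - ⟪gradient g w, d⟫ = ‖d‖ ^ 2 := by
    rw [← inner_sub_left, real_inner_self_eq_norm_sq]
  rw [huz, inner_neg_right, real_inner_smul_right, norm_neg, norm_smul, Real.norm_eq_abs,
    abs_inv, NNReal.abs_eq, mul_pow] at hdescent
  rw [huw, inner_sub_right, real_inner_smul_right] at htangent
  have hL' : (0 : ℝ) < L := hLpos
  field_simp at hdescent htangent ⊢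
  nlinarith

theorem sum_norm_gradient_sub_sq_le {ι : Type*} [Fintype ι] {f : ι → E → ℝ}
    (hconv : ∀ i, ConvexOn ℝ Set.univ (f i)) (hdiff : ∀ i, Differentiable ℝ (f i)) {L : NNReal}
    (hL : ∀ i, LipschitzWith L (gradient (f i))) {x₀ : E} (hx₀ : ∑ i, gradient (f i) x₀ = 0)
    (z : E) :
    ∑ i, ‖gradient (f i) z - gradient (f i) x₀‖ ^ 2 ≤ 2 * L * ∑ i, (f i z - f i x₀) :=
  calc ∑ i, ‖gradient (f i) z - gradient (f i) x₀‖ ^ 2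
      ≤ ∑ i, 2 * L * (f i z - f i x₀ - ⟪gradient (f i) x₀, z - x₀⟫) :=
        Finset.sum_le_sum fun i _ => (hconv i).norm_gradient_sub_sq_le (hdiff i) (hL i) x₀ z
    _ = 2 * L * ∑ i, (f i z - f i x₀) := by
        rw [← Finset.mul_sum, Finset.sum_sub_distrib, ← sum_inner, hx₀, inner_zero_left, sub_zero]

theorem sum_norm_svrg_direction_sq_le {ι : Type*} [Fintype ι] {f : ι → E → ℝ}
    (hconv : ∀ i, ConvexOn ℝ Set.univ (f i)) (hdiff : ∀ i, Differentiable ℝ (f i)) {L : NNReal}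
    (hL : ∀ i, LipschitzWith L (gradient (f i))) {x₀ : E} (hx₀ : ∑ i, gradient (f i) x₀ = 0)
    (x y : E) :
    ∑ j, ‖gradient (f j) x - gradient (f j) y
        + (Fintype.card ι : ℝ)⁻¹ • ∑ i, gradient (f i) y‖ ^ 2
      ≤ 4 * L * (∑ i, (f i x - f i x₀) + ∑ i, (f i y - f i x₀)) := by
  set a := fun j => gradient (f j) x - gradient (f j) x₀
  set b := fun j => gradient (f j) y - gradient (f j) x₀
  have hmean : ∑ i, gradient (f i) y = ∑ i, b i := by
    simp only [b, Finset.sum_sub_distrib, hx₀, sub_zero]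
  have hsplit : ∀ j, gradient (f j) x - gradient (f j) y
      + (Fintype.card ι : ℝ)⁻¹ • ∑ i, gradient (f i) y
      = a j - (b j - (Fintype.card ι : ℝ)⁻¹ • ∑ i, b i) := fun j => by
    rw [hmean]; simp only [a, b]; abel
  calc ∑ j, ‖gradient (f j) x - gradient (f j) y
          + (Fintype.card ι : ℝ)⁻¹ • ∑ i, gradient (f i) y‖ ^ 2
      ≤ ∑ j, 2 * (‖a j‖ ^ 2 + ‖b j - (Fintype.card ι : ℝ)⁻¹ • ∑ i, b i‖ ^ 2) :=
        Finset.sum_le_sum fun j _ => hsplit j ▸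
          (pow_le_pow_left₀ (norm_nonneg _) (norm_sub_le _ _) 2).trans add_sq_le
    _ ≤ 2 * (∑ j, ‖a j‖ ^ 2 + ∑ j, ‖b j‖ ^ 2) := by
        rw [← Finset.mul_sum, Finset.sum_add_distrib]
        gcongr 2 * (_ + ?_)
        exact sum_norm_sub_average_sq_le b
    _ ≤ 2 * (2 * L * ∑ i, (f i x - f i x₀) + 2 * L * ∑ i, (f i y - f i x₀)) := by
        gcongr
        · exact sum_norm_gradient_sub_sq_le hconv hdiff hL hx₀ x
        · exact sum_norm_gradient_sub_sq_le hconv hdiff hL hx₀ y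
    _ = 4 * L * (∑ i, (f i x - f i x₀) + ∑ i, (f i y - f i x₀)) := by ring

end Gradient

theorem integral_prod_le_integral_of_integral_le {α Ω : Type*} [MeasurableSpace α] [Finite α]
    [MeasurableSingletonClass α] [MeasurableSpace Ω] {ν : Measure α} [IsFiniteMeasure ν]
    {μ : Measure Ω} [SFinite μ] {G : α × Ω → ℝ} (hG : 0 ≤ G) {B : α → ℝ}
    (hB : ∀ a, ∫ ω, G (a, ω) ∂μ ≤ B a) :
    ∫ p, G p ∂(ν.prod μ) ≤ ∫ a, B a ∂ν := by
  by_cases hint : Integrable G (ν.prod μ)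
  · rw [integral_prod G hint]
    exact integral_mono .of_finite .of_finite hB
  · rw [integral_undef hint]
    exact integral_nonneg fun a => (integral_nonneg fun ω => hG (a, ω)).trans (hB a)

theorem PMF.integral_uniformOfFintype {α E : Type*} [Fintype α] [Nonempty α] [MeasurableSpace α]
    [MeasurableSingletonClass α] [NormedAddCommGroup E] [NormedSpace ℝ E] [CompleteSpace E]
    (f : α → E) :
    ∫ a, f a ∂(PMF.uniformOfFintype α).toMeasure = (Fintype.card α : ℝ)⁻¹ • ∑ a, f a := by
  simp [PMF.integral_eq_sum, Finset.smul_sum]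

theorem qsvrg_update_second_moment_general (n m : ℕ) (hm : 1 ≤ m)
    (f : Fin m → EuclideanSpace ℝ (Fin n) → ℝ)
    (hconv : ∀ i, ConvexOn ℝ Set.univ (f i))
    (hdiff : ∀ i, Differentiable ℝ (f i))
    (L : NNReal) (hL : ∀ i, LipschitzWith L (gradient (f i)))
    (F : EuclideanSpace ℝ (Fin n) → ℝ)
    (hF : F = fun z => (m : ℝ)⁻¹ * ∑ i, f i z)
    (xstar : EuclideanSpace ℝ (Fin n)) (hmin : ∀ y, F xstar ≤ F y)
    {Ω : Type*} [MeasurableSpace Ω] (μ' : Measure Ω) [IsProbabilityMeasure μ']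
    (Q : EuclideanSpace ℝ (Fin n) → Ω → EuclideanSpace ℝ (Fin n))
    (hQmom : ∀ w, ∫ ω, ‖Q w ω‖ ^ 2 ∂μ' ≤ 2 * ‖w‖ ^ 2)
    (x y : EuclideanSpace ℝ (Fin n)) :
    haveI : Nonempty (Fin m) := ⟨⟨0, hm⟩⟩
    ∫ p, ‖Q (gradient (f p.1) x - gradient (f p.1) y + gradient F y) p.2‖ ^ 2
        ∂((PMF.uniformOfFintype (Fin m)).toMeasure.prod μ')
      ≤ 16 * (L : ℝ) * ((F x - F xstar) + (F y - F xstar)) := by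
  have : Nonempty (Fin m) := ⟨⟨0, hm⟩⟩
  have hgradF (z) : gradient F z = (m : ℝ)⁻¹ • ∑ i, gradient (f i) z := by
    subst hF
    exact ((HasGradientAt.sum fun i _ => (hdiff i z).hasGradientAt).const_mul _).gradient
  have hstat : ∑ i, gradient (f i) xstar = 0 := by
    have := IsLocalMin.gradient_eq_zero (Filter.Eventually.of_forall hmin : IsLocalMin F xstar)
    rwa [hgradF, smul_eq_zero_iff_right (by positivity)] at this
  have hgap (z) : F z - F xstar = (m : ℝ)⁻¹ * ∑ i, (f i z - f i xstar) := by
    simp only [hF, Finset.sum_sub_distrib, mul_sub]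
  set W := fun j : Fin m => gradient (f j) x - gradient (f j) y + gradient F y
  calc ∫ p, ‖Q (W p.1) p.2‖ ^ 2 ∂((PMF.uniformOfFintype (Fin m)).toMeasure.prod μ')
      ≤ ∫ j, 2 * ‖W j‖ ^ 2 ∂(PMF.uniformOfFintype (Fin m)).toMeasure :=
        integral_prod_le_integral_of_integral_le (fun _ => by positivity) fun j => hQmom (W j)
    _ = 2 * ((m : ℝ)⁻¹ * ∑ j, ‖W j‖ ^ 2) := by
        rw [PMF.integral_uniformOfFintype, Fintype.card_fin, smul_eq_mul, ← Finset.mul_sum]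
        ring
    _ ≤ 2 * ((m : ℝ)⁻¹ * (4 * L * (∑ i, (f i x - f i xstar) + ∑ i, (f i y - f i xstar)))) := by
        gcongr
        simpa only [W, hgradF, Fintype.card_fin] using
          sum_norm_svrg_direction_sq_le hconv hdiff hL hstat x y
    _ = 8 * L * ((F x - F xstar) + (F y - F xstar)) := by rw [hgap, hgap]; ring
    _ ≤ 16 * L * ((F x - F xstar) + (F y - F xstar)) :=
        mul_le_mul_of_nonneg_right (by gcongr; norm_num)
          (add_nonneg (sub_nonneg.2 (hmin x)) (sub_nonneg.2 (hmin y)))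

/-- **Second moment bound for the quantized SVRG update.**
With `f = (1/m) ∑ᵢ fᵢ`, `f` `ℓ`-strongly convex, each `fᵢ` convex with `L`-Lipschitz
gradient, unique minimizer `x*`, and a stochastic quantization kernel `Q` satisfying
`E[Q(w)] = w` and `E[‖Q(w)‖₂²] ≤ 2‖w‖₂²`, the quantized SVRG update
`v = Q(∇f_j(x) − ∇f_j(y) + ∇f(y))` (with `j` uniform and independent of the
quantization randomness) satisfies
`E[‖v‖₂²] ≤ 16 L (f(x) − f(x*) + f(y) − f(x*))`. -/
theorem qsvrg_update_second_moment (n m : ℕ) (hm : 1 ≤ m)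
    (f : Fin m → EuclideanSpace ℝ (Fin n) → ℝ)
    (hconv : ∀ i, ConvexOn ℝ Set.univ (f i))
    (hdiff : ∀ i, Differentiable ℝ (f i))
    (L : NNReal) (hL : ∀ i, LipschitzWith L (gradient (f i)))
    (F : EuclideanSpace ℝ (Fin n) → ℝ)
    (hF : F = fun z => (m : ℝ)⁻¹ * ∑ i, f i z)
    (ℓ : ℝ) (hℓ : 0 < ℓ)
    (hsc : ∀ x y : EuclideanSpace ℝ (Fin n),
      F x + ⟪gradient F x, y - x⟫ + ℓ / 2 * ‖y - x‖ ^ 2 ≤ F y)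
    (xstar : EuclideanSpace ℝ (Fin n)) (hmin : ∀ y, F xstar ≤ F y)
    (huniq : ∀ z, (∀ y, F z ≤ F y) → z = xstar)
    {Ω : Type*} [MeasurableSpace Ω] (μ' : Measure Ω) [IsProbabilityMeasure μ']
    (Q : EuclideanSpace ℝ (Fin n) → Ω → EuclideanSpace ℝ (Fin n))
    (hQmeas : ∀ w, Measurable (Q w))
    (hQint : ∀ w, Integrable (Q w) μ')
    (hQsqint : ∀ w, Integrable (fun ω => ‖Q w ω‖ ^ 2) μ')
    (hQmean : ∀ w, ∫ ω, Q w ω ∂μ' = w)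
    (hQmom : ∀ w, ∫ ω, ‖Q w ω‖ ^ 2 ∂μ' ≤ 2 * ‖w‖ ^ 2)
    (x y : EuclideanSpace ℝ (Fin n)) :
    haveI : Nonempty (Fin m) := ⟨⟨0, hm⟩⟩
    ∫ p, ‖Q (gradient (f p.1) x - gradient (f p.1) y + gradient F y) p.2‖ ^ 2
        ∂((PMF.uniformOfFintype (Fin m)).toMeasure.prod μ')
      ≤ 16 * (L : ℝ) * ((F x - F xstar) + (F y - F xstar)) :=
  qsvrg_update_second_moment_general n m hm f hconv hdiff L hL F hF xstar hmin μ' Q hQmom x y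
end
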